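/- arXiv:2603.14835 — 6 statements merged into one kernel-verified Lean document; each statement's English description precedes it below -/
import Mathlib

section
/- Let 0 < α < 1 and τ > 0, and let U(F) denote the set of α-quantiles of F. For every probability distribution F on [0,∞), the set of α-quantiles of the right-censored distribution [F]_τ is a subset of { min(q, τ) : q ∈ U(F) }. -/
open MeasureTheory

/-- `x` is an `α`-quantile of the distribution `μ`:
`lim_{y↑x} F(y) = μ(Iio x) ≤ α ≤ μ(Iic x) = F(x)`. -/
def IsAlphaQuantile (μ : Measure ℝ) (α x : ℝ) : Prop :=
  (μ (Set.Iio x)).toReal ≤ α ∧ α ≤ (μ (Set.Iic x)).toReal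

/-!
Censoring at `τ` leaves the distribution function `F` unchanged on `(-∞, τ)` and makes it jump
to `1` at `τ`. So a quantile `x < τ` of `[F]_τ` is a quantile of `F`, and, as `α < 1`, no quantile
of `[F]_τ` exceeds `τ`. If `τ` is one, then `F(τ-) ≤ α`, and `q = inf {y ≥ τ | α ≤ F y}` is a
quantile of `F` with `min q τ = τ`: right-continuity gives `α ≤ F q`, and `F < α` on `(τ, q)`
gives `F(q-) ≤ α`.
-/

open Set Filter Topology Function ProbabilityTheory

theorem Monotone.exists_ge_leftLim_le_le {f : ℝ → ℝ} (hf : Monotone f)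
    (hcont : ∀ x, ContinuousWithinAt f (Ici x) x) {α τ : ℝ} (hτ : leftLim f τ ≤ α)
    (hα : ∃ y, α ≤ f y) : ∃ q, τ ≤ q ∧ leftLim f q ≤ α ∧ α ≤ f q := by
  set S := {y | τ ≤ y ∧ α ≤ f y}
  obtain ⟨y, hy⟩ := hα
  have hS : S.Nonempty := ⟨max y τ, le_max_right _ _, hy.trans (hf (le_max_left _ _))⟩
  have hτS : τ ∈ lowerBounds S := fun _ h => h.1
  set q := sInf S
  have hτq : τ ≤ q := le_csInf hS hτS
  refine ⟨q, hτq, ?_, ?_⟩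
  · rcases hτq.eq_or_lt with hτq | hτq
    · rwa [← hτq]
    · refine _root_.le_of_tendsto (hf.tendsto_leftLim q) ?_
      filter_upwards [Ioo_mem_nhdsLT hτq] with z hz
      by_contra! h
      exact notMem_of_lt_csInf hz.2 ⟨τ, hτS⟩ ⟨hz.1.le, h.le⟩
  · have : (𝓝[S] q).NeBot := mem_closure_iff_nhdsWithin_neBot.1 (csInf_mem_closure hS ⟨τ, hτS⟩)
    exact _root_.ge_of_tendsto ((hcont q).mono fun z hz => csInf_le ⟨τ, hτS⟩ hz)
      (eventually_nhdsWithin_of_forall fun z hz => hz.2)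

lemma ProbabilityTheory.measureReal_Iio_eq_leftLim_cdf (μ : Measure ℝ) [IsProbabilityMeasure μ]
    (x : ℝ) : μ.real (Iio x) = leftLim (cdf μ) x := by
  have hnonneg : 0 ≤ leftLim (cdf μ) x :=
    (cdf_nonneg μ (x - 1)).trans ((monotone_cdf μ).le_leftLim (sub_one_lt x))
  conv_lhs => rw [← measure_cdf μ]
  rw [measureReal_def, (cdf μ).measure_Iio (tendsto_cdf_atBot μ), sub_zero,
    ENNReal.toReal_ofReal hnonneg]

lemma isAlphaQuantile_iff_cdf (μ : Measure ℝ) [IsProbabilityMeasure μ] (α x : ℝ) :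
    IsAlphaQuantile μ α x ↔ leftLim (cdf μ) x ≤ α ∧ α ≤ cdf μ x := by
  rw [IsAlphaQuantile, ← measureReal_def, ← measureReal_def, measureReal_Iio_eq_leftLim_cdf,
    cdf_eq_real]

lemma exists_isAlphaQuantile_ge (μ : Measure ℝ) [IsProbabilityMeasure μ] {α τ : ℝ}
    (hα : α < 1) (hτ : (μ (Iio τ)).toReal ≤ α) : ∃ q, τ ≤ q ∧ IsAlphaQuantile μ α q := by
  simp only [isAlphaQuantile_iff_cdf]
  rw [← measureReal_def, measureReal_Iio_eq_leftLim_cdf] at hτ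
  exact (monotone_cdf μ).exists_ge_leftLim_le_le (cdf μ).right_continuous hτ
    ((tendsto_cdf_atTop μ).eventually (eventually_ge_nhds hα)).exists

section Censoring

variable {τ x : ℝ}

lemma preimage_min_Iio (h : x ≤ τ) : (fun t => min t τ) ⁻¹' Iio x = Iio x := by
  ext t
  simp only [mem_preimage, mem_Iio, min_lt_iff]
  exact or_iff_left_of_imp fun ht => absurd h (not_le.2 ht)

lemma preimage_min_Iic (h : x < τ) : (fun t => min t τ) ⁻¹' Iic x = Iic x := by
  ext t
  simp only [mem_preimage, mem_Iic, min_le_iff]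
  exact or_iff_left_of_imp fun ht => absurd h (not_lt.2 ht)

lemma preimage_min_Iio_of_lt (h : τ < x) : (fun t => min t τ) ⁻¹' Iio x = univ :=
  eq_univ_of_forall fun _ => min_lt_of_right_lt h

variable {μ : Measure ℝ} {α : ℝ}

lemma map_min_apply {s : Set ℝ} (hs : MeasurableSet s) :
    μ.map (fun t => min t τ) s = μ ((fun t => min t τ) ⁻¹' s) :=
  Measure.map_apply (measurable_id.min measurable_const) hs

lemma isAlphaQuantile_map_min_iff_of_lt (h : x < τ) :
    IsAlphaQuantile (μ.map fun t => min t τ) α x ↔ IsAlphaQuantile μ α x := by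
  rw [IsAlphaQuantile, map_min_apply measurableSet_Iio, map_min_apply measurableSet_Iic,
    preimage_min_Iio h.le, preimage_min_Iic h, IsAlphaQuantile]

lemma le_of_isAlphaQuantile_map_min [IsProbabilityMeasure μ] (hα : α < 1)
    (h : IsAlphaQuantile (μ.map fun t => min t τ) α x) : x ≤ τ := by
  by_contra! hτx
  have hlow := h.1
  rw [map_min_apply measurableSet_Iio, preimage_min_Iio_of_lt hτx, measure_univ,
    ENNReal.toReal_one] at hlow
  linarith

end Censoring

theorem censored_quantile_subset_general (μ : Measure ℝ) [IsProbabilityMeasure μ]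
    (α τ : ℝ) (hα1 : α < 1) :
    {x : ℝ | IsAlphaQuantile (μ.map (fun t => min t τ)) α x} ⊆
      (fun q => min q τ) '' {q : ℝ | IsAlphaQuantile μ α q} := by
  intro x hx
  rcases (le_of_isAlphaQuantile_map_min hα1 hx).lt_or_eq with hxτ | rfl
  · exact ⟨x, (isAlphaQuantile_map_min_iff_of_lt hxτ).1 hx, min_eq_left hxτ.le⟩
  · have hlow : (μ (Iio x)).toReal ≤ α := by
      simpa only [map_min_apply measurableSet_Iio, preimage_min_Iio le_rfl] using hx.1
    obtain ⟨q, hxq, hq⟩ := exists_isAlphaQuantile_ge μ hα1 hlow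
    exact ⟨q, hq, min_eq_right hxq⟩

/-- the set of `α`-quantiles of the right-censored distribution `[F]_τ`
is contained in `{ min q τ : q an α-quantile of F }`. -/
theorem censored_quantile_subset (μ : Measure ℝ) [IsProbabilityMeasure μ]
    (hsupp : μ (Set.Iio 0) = 0)
    (α τ : ℝ) (hα : 0 < α) (hα1 : α < 1) (hτ : 0 < τ) :
    {x : ℝ | IsAlphaQuantile (μ.map (fun t => min t τ)) α x} ⊆
      (fun q => min q τ) '' {q : ℝ | IsAlphaQuantile μ α q} :=
  censored_quantile_subset_general μ α τ hα1
end

section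
/- Suppose S is a strictly proper scoring rule relative to a class F* of probability distributions on an interval I = [0,∞), and F is a class of distributions on I such that the right-censored distribution [F]_τ belongs to F* whenever F ∈ F. Then the scoring rule S_τ defined by S_τ(F,t) = S([F]_τ, t) is provisionally strictly proper relative to F on [0,τ]: for all F, G in F, E_F S_τ(F, min(T,τ)) ≤ E_F S_τ(G, min(T,τ)) with equality if and only if [F]_τ = [G]_τ. -/
/-!
By the change of variables `s = min t τ`, `E_F S([G]_τ, min(T,τ)) = E_{[F]_τ} S([G]_τ, ·)`, so the
claim is strict propriety of `S` at the pair `[F]_τ, [G]_τ ∈ 𝓕s`. The change of variables has to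
hold for arbitrary `S`, including the case where the Bochner integrals are the junk value `0`; the
decomposition `[F]_τ = F|_{(-∞,τ)} + F[τ,∞) • δ_τ` shows that `g ∘ min · τ` is a.e. strongly
measurable for `F` only if `g` is for `[F]_τ`.
-/

open MeasureTheory Set

theorem map_min_eq_restrict_add_dirac (F : Measure ℝ) (τ : ℝ) :
    F.map (fun t => min t τ) = F.restrict (Iio τ) + F (Ici τ) • Measure.dirac τ := by
  have below : (F.restrict (Iio τ)).map (fun t => min t τ) = F.restrict (Iio τ) := by
    rw [Measure.map_congr (g := id), Measure.map_id]
    filter_upwards [ae_restrict_mem measurableSet_Iio] with t ht using min_eq_left ht.le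
  have above : (F.restrict (Ici τ)).map (fun t => min t τ) = F (Ici τ) • Measure.dirac τ := by
    rw [Measure.map_congr (g := fun _ => τ), Measure.map_const, Measure.restrict_apply_univ]
    filter_upwards [ae_restrict_mem measurableSet_Ici] with t ht using min_eq_right ht
  rw [← below, ← above, ← Measure.map_add _ _ (measurable_id'.min measurable_const), ← compl_Iio,
    Measure.restrict_add_restrict_compl measurableSet_Iio]

theorem aestronglyMeasurable_map_min {E : Type*} [TopologicalSpace E]
    [TopologicalSpace.PseudoMetrizableSpace E] {F : Measure ℝ} {τ : ℝ} {g : ℝ → E}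
    (hg : AEStronglyMeasurable (fun t => g (min t τ)) F) :
    AEStronglyMeasurable g (F.map (fun t => min t τ)) := by
  rw [map_min_eq_restrict_add_dirac]
  refine .add_measure (hg.restrict.congr ?_) (.smul_measure aestronglyMeasurable_dirac _)
  filter_upwards [ae_restrict_mem measurableSet_Iio] with t ht using by rw [min_eq_left ht.le]

theorem integral_comp_min {E : Type*} [NormedAddCommGroup E] [NormedSpace ℝ E]
    (F : Measure ℝ) (τ : ℝ) (g : ℝ → E) :
    ∫ t, g (min t τ) ∂F = ∫ s, g s ∂(F.map (fun t => min t τ)) := by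
  have hmin : AEMeasurable (fun t : ℝ => min t τ) F :=
    (measurable_id.min measurable_const).aemeasurable
  by_cases hg : AEStronglyMeasurable (fun t => g (min t τ)) F
  · exact (integral_map hmin (aestronglyMeasurable_map_min hg)).symm
  · rw [integral_non_aestronglyMeasurable hg,
      integral_non_aestronglyMeasurable fun h => hg (h.comp_aemeasurable hmin)]

theorem provisional_from_strictly_proper_general
    (τ : ℝ)
    (𝓕 𝓕s : Set (Measure ℝ))
    (hclosed : ∀ F ∈ 𝓕, F.map (fun t => min t τ) ∈ 𝓕s)
    (S : Measure ℝ → ℝ → ℝ)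
    (hproper : ∀ F ∈ 𝓕s, ∀ G ∈ 𝓕s,
      (∫ t, S F t ∂F) ≤ (∫ t, S G t ∂F) ∧
      ((∫ t, S F t ∂F) = (∫ t, S G t ∂F) → F = G)) :
    ∀ F ∈ 𝓕, ∀ G ∈ 𝓕,
      (∫ t, S (F.map (fun t => min t τ)) (min t τ) ∂F) ≤
        (∫ t, S (G.map (fun t => min t τ)) (min t τ) ∂F) ∧
      ((∫ t, S (F.map (fun t => min t τ)) (min t τ) ∂F) =
        (∫ t, S (G.map (fun t => min t τ)) (min t τ) ∂F) →
        F.map (fun t => min t τ) = G.map (fun t => min t τ)) := by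
  intro F hF G hG
  rw [integral_comp_min F τ (S _), integral_comp_min F τ (S _)]
  exact hproper _ (hclosed F hF) _ (hclosed G hG)

/-- Theorem 1: if `S` is a strictly proper scoring rule relative to a class
`𝓕s` of probability distributions on `[0,∞)` and `𝓕` is a class of distributions whose
right-censored versions lie in `𝓕s`, then the scoring rule `S_τ(F,t) = S([F]_τ, t)` is
provisionally strictly proper relative to `𝓕` on `[0,τ]`. -/
theorem provisional_from_strictly_proper
    (τ : ℝ) (hτ : 0 < τ)
    (𝓕 𝓕s : Set (Measure ℝ))
    (hprob : ∀ F ∈ 𝓕, IsProbabilityMeasure F)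
    (hsupp : ∀ F ∈ 𝓕, F (Set.Iio 0) = 0)
    (hclosed : ∀ F ∈ 𝓕, F.map (fun t => min t τ) ∈ 𝓕s)
    (S : Measure ℝ → ℝ → ℝ)
    (hproper : ∀ F ∈ 𝓕s, ∀ G ∈ 𝓕s,
      (∫ t, S F t ∂F) ≤ (∫ t, S G t ∂F) ∧
      ((∫ t, S F t ∂F) = (∫ t, S G t ∂F) → F = G)) :
    ∀ F ∈ 𝓕, ∀ G ∈ 𝓕,
      (∫ t, S (F.map (fun t => min t τ)) (min t τ) ∂F) ≤
        (∫ t, S (G.map (fun t => min t τ)) (min t τ) ∂F) ∧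
      ((∫ t, S (F.map (fun t => min t τ)) (min t τ) ∂F) =
        (∫ t, S (G.map (fun t => min t τ)) (min t τ) ∂F) →
        F.map (fun t => min t τ) = G.map (fun t => min t τ)) :=
  provisional_from_strictly_proper_general τ 𝓕 𝓕s hclosed S hproper
end

section
/- Let 0 < α < 1, let g : [0,∞) → ℝ be a function that is strictly increasing on [0,τ] for some τ > 0, and define S(x,t) = (1{min(x,τ) ≥ min(t,τ)} − α)(g(min(x,τ)) − g(min(t,τ))). Then for every probability distribution F on [0,∞) such that E_F g(min(T,τ)) is finite, every α-quantile u of F, and every x in [0,∞): E_F S(u, min(T,τ)) ≤ E_F S(x, min(T,τ)). -/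
open MeasureTheory

/-!
With `Y = min T τ`, `a = min u τ` and `b = min x τ`, monotonicity of `g` on the range of `Y`
gives pointwise `S(b,Y) - S(a,Y) ≥ (1{Y ≤ a} - α)(g b - g a)` when `a ≤ b`, and the same with
`1{Y < a}` when `b ≤ a`. In expectation the right-hand sides become `(P(Y ≤ a) - α)(g b - g a)`
and `(P(Y < a) - α)(g b - g a)`, both nonnegative exactly by the two halves of the quantile
condition; and since censoring is monotone, `a` is an `α`-quantile of the law of `Y`.
-/

noncomputable def quantileScore (α : ℝ) (g : ℝ → ℝ) (c y : ℝ) : ℝ :=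
  ((if c ≥ y then 1 else 0) - α) * (g c - g y)

section Pointwise

variable {α : ℝ} {g : ℝ → ℝ} {s : Set ℝ} {a b y : ℝ}

lemma quantileScore_add_le_of_le (hg : MonotoneOn g s) (ha : a ∈ s) (hb : b ∈ s) (hy : y ∈ s)
    (hab : a ≤ b) :
    quantileScore α g a y + ((Set.Iic a).indicator 1 y - α) * (g b - g a) ≤
      quantileScore α g b y := by
  have hgab := hg ha hb hab
  simp only [quantileScore, Set.indicator_apply, Set.mem_Iic, Pi.one_apply, ge_iff_le]
  rcases lt_or_ge b y with hby | hyb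
  · split_ifs <;> nlinarith
  · have := hg hy hb hyb
    split_ifs <;> nlinarith

lemma quantileScore_add_le_of_ge (hg : MonotoneOn g s) (ha : a ∈ s) (hb : b ∈ s) (hy : y ∈ s)
    (hba : b ≤ a) :
    quantileScore α g a y + ((Set.Iio a).indicator 1 y - α) * (g b - g a) ≤
      quantileScore α g b y := by
  have hgba := hg hb ha hba
  simp only [quantileScore, Set.indicator_apply, Set.mem_Iio, Pi.one_apply, ge_iff_le]
  rcases lt_trichotomy y a with hya | rfl | hay
  · rcases le_or_gt y b with hyb | hby
    · split_ifs <;> nlinarith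
    · have := hg hb hy hby.le
      split_ifs <;> nlinarith
  · rcases hba.lt_or_eq with hba | rfl
    · simp [hba.not_ge]
    · simp
  · split_ifs <;> nlinarith

end Pointwise

section Integral

variable {Ω : Type*} [MeasurableSpace Ω] {μ : Measure Ω} [IsProbabilityMeasure μ]
  {Y : Ω → ℝ} {α : ℝ} {g : ℝ → ℝ}

lemma integrable_quantileScore (hY : Measurable Y) (hint : Integrable (fun ω => g (Y ω)) μ)
    (c : ℝ) : Integrable (fun ω => quantileScore α g c (Y ω)) μ := by
  refine ((integrable_const (g c)).sub hint).bdd_mul (c := 1 + |α|) ?_ ?_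
  · exact ((Measurable.ite (measurableSet_le hY measurable_const) measurable_const
      measurable_const).sub_const α).aestronglyMeasurable
  · refine .of_forall fun ω => ?_
    split_ifs
    · simpa using abs_sub 1 α
    · simp

lemma integral_indicator_comp_sub_mul (hY : Measurable Y) {A : Set ℝ} (hA : MeasurableSet A)
    (C : ℝ) : ∫ ω, (A.indicator 1 (Y ω) - α) * C ∂μ = ((μ.map Y A).toReal - α) * C := by
  simp_rw [← Set.indicator_comp_right, Pi.one_comp]
  rw [integral_mul_const, integral_sub ?_ (integrable_const α), integral_indicator_one (hY hA),
    Measure.map_apply hY hA]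
  · simp [measureReal_def]
  · exact (integrable_const 1).indicator (hY hA)

lemma integral_quantileScore_add_le (hY : Measurable Y) (hint : Integrable (fun ω => g (Y ω)) μ)
    {A : Set ℝ} (hA : MeasurableSet A) {a b : ℝ}
    (hpt : ∀ᵐ ω ∂μ, quantileScore α g a (Y ω) + (A.indicator 1 (Y ω) - α) * (g b - g a) ≤
      quantileScore α g b (Y ω)) :
    ∫ ω, quantileScore α g a (Y ω) ∂μ + ((μ.map Y A).toReal - α) * (g b - g a) ≤
      ∫ ω, quantileScore α g b (Y ω) ∂μ := by
  have hind : Integrable (fun ω => (A.indicator 1 (Y ω) - α) * (g b - g a)) μ := by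
    refine Integrable.mul_const ?_ _
    simp_rw [← Set.indicator_comp_right, Pi.one_comp]
    exact ((integrable_const 1).indicator (hY hA)).sub (integrable_const α)
  have hscore := integrable_quantileScore (α := α) hY hint
  rw [← integral_indicator_comp_sub_mul hY hA, ← integral_add (hscore a) hind]
  exact integral_mono_ae ((hscore a).add hind) (hscore b) hpt

theorem integral_quantileScore_le_of_isAlphaQuantile (hY : Measurable Y) {s : Set ℝ}
    (hYs : ∀ᵐ ω ∂μ, Y ω ∈ s) (hg : MonotoneOn g s) (hint : Integrable (fun ω => g (Y ω)) μ)
    {a b : ℝ} (ha : a ∈ s) (hb : b ∈ s) (hq : IsAlphaQuantile (μ.map Y) α a) :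
    ∫ ω, quantileScore α g a (Y ω) ∂μ ≤ ∫ ω, quantileScore α g b (Y ω) ∂μ := by
  rcases le_total a b with hab | hba
  · have := integral_quantileScore_add_le (α := α) hY hint measurableSet_Iic <|
      hYs.mono fun ω hω => quantileScore_add_le_of_le hg ha hb hω hab
    nlinarith [hq.2, hg ha hb hab]
  · have := integral_quantileScore_add_le (α := α) hY hint measurableSet_Iio <|
      hYs.mono fun ω hω => quantileScore_add_le_of_ge hg ha hb hω hba
    nlinarith [hq.1, hg hb ha hba]

end Integral

namespace IsAlphaQuantile

variable {μ : Measure ℝ} {α u : ℝ}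

lemma le_of_measure_Iio_eq_zero (hu : IsAlphaQuantile μ α u) (hα : 0 < α) {c : ℝ}
    (hc : μ (Set.Iio c) = 0) : c ≤ u := by
  by_contra! huc
  have h := hu.2
  rw [measure_mono_null (Set.Iic_subset_Iio.2 huc) hc, ENNReal.toReal_zero] at h
  linarith

lemma map_monotone [IsFiniteMeasure μ] (hu : IsAlphaQuantile μ α u) {f : ℝ → ℝ}
    (hf : Monotone f) : IsAlphaQuantile (μ.map f) α (f u) := by
  rw [IsAlphaQuantile, Measure.map_apply hf.measurable measurableSet_Iio,
    Measure.map_apply hf.measurable measurableSet_Iic]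
  constructor
  · refine le_trans (ENNReal.toReal_mono (measure_ne_top μ _) (measure_mono ?_)) hu.1
    exact fun t ht => lt_of_not_ge fun hut => (hf hut).not_gt ht
  · exact hu.2.trans (ENNReal.toReal_mono (measure_ne_top μ _) (measure_mono fun t ht => hf ht))

end IsAlphaQuantile

theorem quantile_provisionally_consistent_general
    (α τ : ℝ) (hα : 0 < α) (hτ : 0 < τ)
    (g : ℝ → ℝ) (hg : StrictMonoOn g (Set.Icc 0 τ))
    (μ : Measure ℝ) [IsProbabilityMeasure μ] (hsupp : μ (Set.Iio 0) = 0)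
    (hint : Integrable (fun t => g (min t τ)) μ)
    (u : ℝ) (hu : IsAlphaQuantile μ α u)
    (x : ℝ) (hx : 0 ≤ x) :
    (∫ t, ((if min u τ ≥ min t τ then (1 : ℝ) else 0) - α) *
        (g (min u τ) - g (min t τ)) ∂μ) ≤
      ∫ t, ((if min x τ ≥ min t τ then (1 : ℝ) else 0) - α) *
        (g (min x τ) - g (min t τ)) ∂μ := by
  have hcens : Monotone fun t : ℝ => min t τ := fun _ _ h => min_le_min_right τ h
  have hmem : ∀ {t}, 0 ≤ t → min t τ ∈ Set.Icc 0 τ := fun ht =>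
    ⟨le_min ht hτ.le, min_le_right _ _⟩
  have hYs : ∀ᵐ t ∂μ, min t τ ∈ Set.Icc 0 τ :=
    (measure_eq_zero_iff_ae_notMem.1 hsupp).mono fun t ht => hmem (not_lt.1 ht)
  exact integral_quantileScore_le_of_isAlphaQuantile hcens.measurable hYs hg.monotoneOn hint
    (hmem (hu.le_of_measure_Iio_eq_zero hα hsupp)) (hmem hx) (hu.map_monotone hcens)

/-- provisional consistency of the threshold-weighted quantile score:
for `g` strictly increasing on `[0,τ]` and
`S(x,t) = (1{min x τ ≥ min t τ} − α)(g(min x τ) − g(min t τ))`, every `α`-quantile `u`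
of `F` minimizes the expected score against the right-censored realization. -/
theorem quantile_provisionally_consistent
    (α τ : ℝ) (hα : 0 < α) (hα1 : α < 1) (hτ : 0 < τ)
    (g : ℝ → ℝ) (hg : StrictMonoOn g (Set.Icc 0 τ))
    (μ : Measure ℝ) [IsProbabilityMeasure μ] (hsupp : μ (Set.Iio 0) = 0)
    (hint : Integrable (fun t => g (min t τ)) μ)
    (u : ℝ) (hu : IsAlphaQuantile μ α u)
    (x : ℝ) (hx : 0 ≤ x) :
    (∫ t, ((if min u τ ≥ min t τ then (1 : ℝ) else 0) - α) *
        (g (min u τ) - g (min t τ)) ∂μ) ≤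
      ∫ t, ((if min x τ ≥ min t τ then (1 : ℝ) else 0) - α) *
        (g (min x τ) - g (min t τ)) ∂μ :=
  quantile_provisionally_consistent_general α τ hα hτ g hg μ hsupp hint u hu x hx
end

section
/- The mean functional is not provisionally elicitable on [0,τ] relative to any class F of probability distributions on [0,∞) that contains all distributions with densities, finite support (i.e., supported in a bounded interval), and finite m-th moment: there exist two distributions F₁ and F₂ with densities and bounded support such that their means are distinct, both means lie in (0,τ), and min(T,τ) has the same distribution under F₁ and F₂. -/
/-!
Both witnesses put mass `1/2` uniformly on `[0, τ)` and the other half uniformly on `[τ, b)`,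
for two different endpoints `b ∈ (τ, 2τ)`. Below `τ` the densities agree, and each puts mass
exactly `1/2` on `[τ, ∞)`, so `min(T, τ)` has the same law under both; the means
`(2τ + b)/4` still differ, and lie in `(0, τ)` because `b < 2τ`.
-/

open MeasureTheory Set
open scoped ENNReal

section CensoredLaw

variable {α : Type*} [TopologicalSpace α] [MeasurableSpace α] [LinearOrder α]
  [OrderClosedTopology α] [OpensMeasurableSpace α] [SecondCountableTopology α]

theorem map_min_eq_of_restrict_Iio_eq {μ ν : Measure α} [IsFiniteMeasure μ] {τ : α}
    (huniv : μ univ = ν univ) (hlt : μ.restrict (Iio τ) = ν.restrict (Iio τ)) :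
    μ.map (min · τ) = ν.map (min · τ) := by
  have hmin : Measurable (min · τ : α → α) := measurable_id.min measurable_const
  have hIio : μ (Iio τ) = ν (Iio τ) := by
    rw [← Measure.restrict_apply_univ, hlt, Measure.restrict_apply_univ]
  have hIci : μ (Ici τ) = ν (Ici τ) := by
    have hν : ν (Iio τ) ≠ ∞ := hIio ▸ measure_ne_top μ _
    rw [← compl_Iio, measure_compl measurableSet_Iio (measure_ne_top μ _),
      measure_compl measurableSet_Iio hν, huniv, hIio]
  have map_restrict_Ici (ρ : Measure α) :
      (ρ.restrict (Ici τ)).map (min · τ) = ρ (Ici τ) • Measure.dirac τ := by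
    rw [Measure.map_congr (g := fun _ => τ), Measure.map_const, Measure.restrict_apply_univ]
    exact ae_restrict_of_forall_mem measurableSet_Ici fun t ht => min_eq_right ht
  rw [← Measure.restrict_add_restrict_compl (μ := μ) (measurableSet_Iio (a := τ)),
    ← Measure.restrict_add_restrict_compl (μ := ν) (measurableSet_Iio (a := τ)),
    Measure.map_add _ _ hmin, Measure.map_add _ _ hmin, compl_Iio, map_restrict_Ici,
    map_restrict_Ici, hlt, hIci]

end CensoredLaw

section WithDensity

variable {α : Type*} [MeasurableSpace α] {μ : Measure α}

theorem restrict_withDensity_eq_of_eqOn {f g : α → ℝ≥0∞} {s : Set α} (hs : MeasurableSet s)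
    (hfg : EqOn f g s) : (μ.withDensity f).restrict s = (μ.withDensity g).restrict s := by
  rw [restrict_withDensity hs, restrict_withDensity hs]
  exact withDensity_congr_ae (ae_restrict_of_forall_mem hs hfg)

theorem isProbabilityMeasure_withDensity_ofReal {f : α → ℝ} (hf : 0 ≤ᵐ[μ] f)
    (hfi : Integrable f μ) (h1 : ∫ x, f x ∂μ = 1) :
    IsProbabilityMeasure (μ.withDensity fun x => ENNReal.ofReal (f x)) := by
  constructor
  rw [withDensity_apply _ MeasurableSet.univ, Measure.restrict_univ,
    ← ofReal_integral_eq_lintegral_ofReal hfi hf, h1, ENNReal.ofReal_one]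

end WithDensity

section IndicatorIco

variable (a b c : ℝ)

theorem integrable_indicator_Ico_const : Integrable ((Ico a b).indicator fun _ => c) :=
  (integrable_indicator_iff measurableSet_Ico).2 (integrableOn_const measure_Ico_lt_top.ne)

theorem mul_indicator_Ico_const :
    (fun s => s * (Ico a b).indicator (fun _ => c) s) = (Ico a b).indicator fun s => s * c :=
  funext fun _ => (indicator_mul_right _ (fun s => s) _).symm

theorem integrable_mul_indicator_Ico_const :
    Integrable fun s => s * (Ico a b).indicator (fun _ => c) s := by
  rw [mul_indicator_Ico_const]
  exact (integrable_indicator_iff measurableSet_Ico).2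
    ((continuous_id.mul continuous_const).integrableOn_Icc.mono_set Ico_subset_Icc_self)

variable {a b}

theorem integral_indicator_Ico_const (hab : a ≤ b) :
    ∫ s, (Ico a b).indicator (fun _ => c) s = c * (b - a) := by
  rw [integral_indicator_const c measurableSet_Ico, Real.volume_real_Ico_of_le hab, smul_eq_mul,
    mul_comm]

theorem integral_mul_indicator_Ico_const (hab : a ≤ b) :
    ∫ s, s * (Ico a b).indicator (fun _ => c) s = c * (b ^ 2 - a ^ 2) / 2 := by
  rw [mul_indicator_Ico_const, integral_indicator measurableSet_Ico,
    setIntegral_congr_set Ico_ae_eq_Ioc, ← intervalIntegral.integral_of_le hab,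
    intervalIntegral.integral_mul_const, integral_id]
  ring

end IndicatorIco

noncomputable def stepDensity (τ b : ℝ) : ℝ → ℝ :=
  (Ico 0 τ).indicator (fun _ => 1 / (2 * τ)) + (Ico τ b).indicator (fun _ => 1 / (2 * (b - τ)))

namespace stepDensity

variable {τ b : ℝ}

theorem measurable : Measurable (stepDensity τ b) :=
  (measurable_const.indicator measurableSet_Ico).add (measurable_const.indicator measurableSet_Ico)

theorem integrable : Integrable (stepDensity τ b) :=
  (integrable_indicator_Ico_const _ _ _).add (integrable_indicator_Ico_const _ _ _)

theorem nonneg (s : ℝ) : 0 ≤ stepDensity τ b s := by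
  refine add_nonneg (indicator_nonneg (fun t ht => ?_) s) (indicator_nonneg (fun t ht => ?_) s)
  · have : 0 < τ := ht.1.trans_lt ht.2
    positivity
  · have : 0 < b - τ := sub_pos.2 (ht.1.trans_lt ht.2)
    positivity

theorem eq_zero (hτ : 0 ≤ τ) (hτb : τ ≤ b) {s : ℝ} (hs : s < 0 ∨ b < s) :
    stepDensity τ b s = 0 := by
  have h₁ : s ∉ Ico 0 τ := fun h => by rcases hs with hs | hs <;> linarith [h.1, h.2]
  have h₂ : s ∉ Ico τ b := fun h => by rcases hs with hs | hs <;> linarith [h.1, h.2]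
  simp [stepDensity, h₁, h₂]

theorem eqOn_Iio (b' : ℝ) : EqOn (stepDensity τ b) (stepDensity τ b') (Iio τ) := by
  intro s hs
  simp [stepDensity, show s ∉ Ico τ b from fun h => not_le.2 hs h.1,
    show s ∉ Ico τ b' from fun h => not_le.2 hs h.1]

theorem integral_eq_one (hτ : 0 < τ) (hτb : τ < b) : ∫ s, stepDensity τ b s = 1 := by
  simp only [stepDensity, Pi.add_apply]
  rw [integral_add (integrable_indicator_Ico_const _ _ _)
      (integrable_indicator_Ico_const _ _ _), integral_indicator_Ico_const _ hτ.le,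
    integral_indicator_Ico_const _ hτb.le]
  field_simp [(sub_pos.2 hτb).ne']
  ring

theorem integral_mul_eq (hτ : 0 < τ) (hτb : τ < b) :
    ∫ s, s * stepDensity τ b s = (2 * τ + b) / 4 := by
  simp_rw [stepDensity, Pi.add_apply, mul_add]
  rw [integral_add (integrable_mul_indicator_Ico_const _ _ _)
      (integrable_mul_indicator_Ico_const _ _ _), integral_mul_indicator_Ico_const _ hτ.le,
    integral_mul_indicator_Ico_const _ hτb.le]
  field_simp [(sub_pos.2 hτb).ne']
  ring

end stepDensity

/-- Corollary: the mean functional is not provisionally elicitable: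
for every `τ > 0` there exist two distributions `F₁, F₂` on `[0,∞)` with (measurable,
nonnegative) densities and bounded support, whose means are distinct, both lie in
`(0,τ)`, and such that the laws of `min(T,τ)` under `F₁` and `F₂` coincide. -/
theorem mean_not_provisionally_elicitable_witness (τ : ℝ) (hτ : 0 < τ) :
    ∃ f₁ f₂ : ℝ → ℝ,
      Measurable f₁ ∧ Measurable f₂ ∧
      (∀ s, 0 ≤ f₁ s) ∧ (∀ s, 0 ≤ f₂ s) ∧
      (∃ b : ℝ, ∀ s, (s < 0 ∨ b < s) → f₁ s = 0 ∧ f₂ s = 0) ∧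
      (∫ s, f₁ s) = 1 ∧ (∫ s, f₂ s) = 1 ∧
      (∫ s, s * f₁ s) ∈ Set.Ioo 0 τ ∧
      (∫ s, s * f₂ s) ∈ Set.Ioo 0 τ ∧
      (∫ s, s * f₁ s) ≠ (∫ s, s * f₂ s) ∧
      (volume.withDensity fun s => ENNReal.ofReal (f₁ s)).map (fun t => min t τ) =
        (volume.withDensity fun s => ENNReal.ofReal (f₂ s)).map (fun t => min t τ) := by
  have h₁ : τ < 5 * τ / 4 := by linarith
  have h₂ : τ < 3 * τ / 2 := by linarith
  have hprob {b : ℝ} (hb : τ < b) :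
      IsProbabilityMeasure (volume.withDensity fun s => ENNReal.ofReal (stepDensity τ b s)) :=
    isProbabilityMeasure_withDensity_ofReal (ae_of_all _ stepDensity.nonneg)
      stepDensity.integrable (stepDensity.integral_eq_one hτ hb)
  have hsupp (s : ℝ) (hs : s < 0 ∨ 3 * τ / 2 < s) :
      stepDensity τ (5 * τ / 4) s = 0 ∧ stepDensity τ (3 * τ / 2) s = 0 :=
    ⟨stepDensity.eq_zero hτ.le h₁.le (hs.imp_right fun h => by linarith),
      stepDensity.eq_zero hτ.le h₂.le hs⟩
  refine ⟨_, _, stepDensity.measurable, stepDensity.measurable, stepDensity.nonneg,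
    stepDensity.nonneg, ⟨3 * τ / 2, hsupp⟩, stepDensity.integral_eq_one hτ h₁,
    stepDensity.integral_eq_one hτ h₂, ?_, ?_, ?_, ?_⟩
  · rw [stepDensity.integral_mul_eq hτ h₁]
    constructor <;> linarith
  · rw [stepDensity.integral_mul_eq hτ h₂]
    constructor <;> linarith
  · rw [stepDensity.integral_mul_eq hτ h₁, stepDensity.integral_mul_eq hτ h₂]
    intro h
    linarith
  · have := hprob h₁
    have := hprob h₂
    exact map_min_eq_of_restrict_Iio_eq (by simp only [measure_univ])
      (restrict_withDensity_eq_of_eqOn measurableSet_Iio fun s hs =>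
        congrArg ENNReal.ofReal (stepDensity.eqOn_Iio _ hs))
end

section
/- Let τ < a < 2τ with τ > 0. The function f₂(s) = 1/a on [0,τ], f₂(s) = (2/a)(1 − (s−τ)/(a−τ)) on (τ,a], and 0 elsewhere is a probability density on [0,∞), its CDF agrees with the uniform CDF F₁(s) = s/a on [0,τ), and its mean satisfies 0 < ∫ s f₂(s) ds < a/2. -/
/-!
`f₂` vanishes off `[0, a]` and is affine on `(0, τ)` and on `(τ, a)`, so every integral in the
statement splits into integrals of polynomials of degree at most two over these intervals.
The mean comes out as `(2a² + 2aτ - τ²) / (6a)`, which lies strictly between `0` and `a / 2`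
because `τ < 2a` and `(a - τ)² > 0`.
-/

open MeasureTheory Set

theorem integral_add_mul_add_mul_sq (u v c d e : ℝ) :
    ∫ x in u..v, (c + d * x + e * x ^ 2) =
      c * (v - u) + d * (v ^ 2 - u ^ 2) / 2 + e * (v ^ 3 - u ^ 3) / 3 := by
  have hc : IntervalIntegrable (fun _ ↦ c) volume u v := intervalIntegrable_const
  have hd : IntervalIntegrable (fun x ↦ d * x) volume u v :=
    (continuous_const_mul d).intervalIntegrable u v
  have he : IntervalIntegrable (fun x ↦ e * x ^ 2) volume u v :=
    (by fun_prop : Continuous fun x : ℝ ↦ e * x ^ 2).intervalIntegrable u v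
  rw [intervalIntegral.integral_add (hc.add hd) he, intervalIntegral.integral_add hc hd,
    intervalIntegral.integral_const, intervalIntegral.integral_const_mul,
    intervalIntegral.integral_const_mul, integral_id, integral_pow, smul_eq_mul]
  ring

section

variable {f : ℝ → ℝ} {u v w : ℝ}

theorem integral_eq_intervalIntegral_of_forall_notMem_Icc (huv : u ≤ v)
    (hf : ∀ x ∉ Icc u v, f x = 0) : ∫ x, f x = ∫ x in u..v, f x := by
  rw [← setIntegral_eq_integral_of_forall_compl_eq_zero hf, integral_Icc_eq_integral_Ioc,
    intervalIntegral.integral_of_le huv]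

theorem integral_eq_add_of_eqOn_Ioo {p q : ℝ → ℝ} (huv : u ≤ v) (hvw : v ≤ w)
    (hf : ∀ x ∉ Icc u w, f x = 0) (hp : Continuous p) (hq : Continuous q)
    (hfp : EqOn f p (Ioo u v)) (hfq : EqOn f q (Ioo v w)) :
    ∫ x, f x = (∫ x in u..v, p x) + ∫ x in v..w, q x := by
  have hf₁ : IntervalIntegrable f volume u v :=
    (hp.intervalIntegrable u v).congr_uIoo (uIoo_of_le huv ▸ hfp.symm)
  have hf₂ : IntervalIntegrable f volume v w :=
    (hq.intervalIntegrable v w).congr_uIoo (uIoo_of_le hvw ▸ hfq.symm)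
  rw [integral_eq_intervalIntegral_of_forall_notMem_Icc (huv.trans hvw) hf,
    ← intervalIntegral.integral_add_adjacent_intervals hf₁ hf₂,
    intervalIntegral.integral_congr_Ioo_of_le huv hfp,
    intervalIntegral.integral_congr_Ioo_of_le hvw hfq]

end

/-- The density `f₂` of the statement. -/
noncomputable def plateauRampDensity (τ a s : ℝ) : ℝ :=
  if s < 0 then 0
  else if s ≤ τ then 1 / a
  else if s ≤ a then (2 / a) * (1 - (s - τ) / (a - τ))
  else 0

section

variable {τ a s : ℝ}

theorem plateauRampDensity_of_neg (hs : s < 0) : plateauRampDensity τ a s = 0 := if_pos hs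

theorem plateauRampDensity_of_mem_Icc (hs : s ∈ Icc 0 τ) : plateauRampDensity τ a s = 1 / a := by
  simp [plateauRampDensity, hs.1.not_gt, hs.2]

theorem plateauRampDensity_of_mem_Ioc (hτ : 0 ≤ τ) (hτa : τ < a) (hs : s ∈ Ioc τ a) :
    plateauRampDensity τ a s = 2 * (a - s) / (a * (a - τ)) := by
  have ha : a ≠ 0 := (hτ.trans_lt hτa).ne'
  have haτ : a - τ ≠ 0 := sub_ne_zero.2 hτa.ne'
  simp only [plateauRampDensity, if_neg (hτ.trans_lt hs.1).not_gt, if_neg hs.1.not_ge,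
    if_pos hs.2]
  field_simp
  ring

theorem plateauRampDensity_of_notMem_Icc (hτa : τ ≤ a) (hs : s ∉ Icc 0 a) :
    plateauRampDensity τ a s = 0 := by
  rcases lt_or_ge s 0 with hs₀ | hs₀
  · exact plateauRampDensity_of_neg hs₀
  · have has : a < s := lt_of_not_ge fun h ↦ hs ⟨hs₀, h⟩
    simp [plateauRampDensity, hs₀.not_gt, (hτa.trans_lt has).not_ge, has.not_ge]

theorem plateauRampDensity_nonneg (hτa : τ < a) (ha : 0 ≤ a) : 0 ≤ plateauRampDensity τ a s := by
  unfold plateauRampDensity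
  split_ifs with hs₀ hsτ hsa
  · rfl
  · positivity
  · have : (s - τ) / (a - τ) ≤ 1 := (div_le_one (sub_pos.2 hτa)).2 (by linarith)
    have : 0 ≤ 2 / a := by positivity
    nlinarith
  · rfl

theorem integral_plateauRampDensity (hτ : 0 ≤ τ) (hτa : τ < a) :
    ∫ s, plateauRampDensity τ a s = 1 := by
  have ha : a ≠ 0 := (hτ.trans_lt hτa).ne'
  have haτ : a - τ ≠ 0 := sub_ne_zero.2 hτa.ne'
  rw [integral_eq_add_of_eqOn_Ioo (p := fun x ↦ 1 / a + 0 * x + 0 * x ^ 2)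
    (q := fun x ↦ 2 / (a - τ) + (-2 / (a * (a - τ))) * x + 0 * x ^ 2) hτ hτa.le
    (fun _ ↦ plateauRampDensity_of_notMem_Icc hτa.le) (by fun_prop) (by fun_prop),
    integral_add_mul_add_mul_sq, integral_add_mul_add_mul_sq]
  · field_simp
    ring
  · intro x hx
    simp [plateauRampDensity_of_mem_Icc (Ioo_subset_Icc_self hx)]
  · intro x hx
    simp only [plateauRampDensity_of_mem_Ioc hτ hτa (Ioo_subset_Ioc_self hx)]
    field_simp
    ring

theorem setIntegral_Iic_plateauRampDensity (hs₀ : 0 ≤ s) (hsτ : s ≤ τ) :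
    ∫ x in Iic s, plateauRampDensity τ a x = s / a := by
  have hf : ∀ x ∉ Icc 0 s, (Iic s).indicator (plateauRampDensity τ a) x = 0 := by
    intro x hx
    rcases lt_or_ge x 0 with hx₀ | hx₀
    · exact indicator_apply_eq_zero.2 fun _ ↦ plateauRampDensity_of_neg hx₀
    · exact indicator_of_notMem (fun hxs : x ∈ Iic s ↦ hx ⟨hx₀, hxs⟩) _
  have hfp : EqOn ((Iic s).indicator (plateauRampDensity τ a)) (fun _ ↦ 1 / a) (Ioo 0 s) := by
    intro x hx
    rw [indicator_of_mem (mem_Iic.2 hx.2.le),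
      plateauRampDensity_of_mem_Icc ⟨hx.1.le, hx.2.le.trans hsτ⟩]
  rw [← integral_indicator measurableSet_Iic,
    integral_eq_intervalIntegral_of_forall_notMem_Icc hs₀ hf,
    intervalIntegral.integral_congr_Ioo_of_le hs₀ hfp, intervalIntegral.integral_const,
    smul_eq_mul]
  ring

theorem integral_mul_plateauRampDensity (hτ : 0 ≤ τ) (hτa : τ < a) :
    ∫ s, s * plateauRampDensity τ a s = (2 * a ^ 2 + 2 * a * τ - τ ^ 2) / (6 * a) := by
  have ha : a ≠ 0 := (hτ.trans_lt hτa).ne'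
  have haτ : a - τ ≠ 0 := sub_ne_zero.2 hτa.ne'
  rw [integral_eq_add_of_eqOn_Ioo (p := fun x ↦ 0 + 1 / a * x + 0 * x ^ 2)
    (q := fun x ↦ 0 + 2 / (a - τ) * x + (-2 / (a * (a - τ))) * x ^ 2) hτ hτa.le
    (fun _ hs ↦ by rw [plateauRampDensity_of_notMem_Icc hτa.le hs, mul_zero])
    (by fun_prop) (by fun_prop),
    integral_add_mul_add_mul_sq, integral_add_mul_add_mul_sq]
  · field_simp
    ring
  · intro x hx
    simp only [plateauRampDensity_of_mem_Icc (Ioo_subset_Icc_self hx)]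
    ring
  · intro x hx
    simp only [plateauRampDensity_of_mem_Ioc hτ hτa (Ioo_subset_Ioc_self hx)]
    field_simp
    ring

end

theorem density_f2_properties_general (τ a : ℝ) (hτ : 0 < τ) (hτa : τ < a) :
    let f₂ : ℝ → ℝ := fun s =>
      if s < 0 then 0
      else if s ≤ τ then 1 / a
      else if s ≤ a then (2 / a) * (1 - (s - τ) / (a - τ))
      else 0
    (∀ s, 0 ≤ f₂ s) ∧ (∫ s, f₂ s) = 1 ∧
      (∀ s, 0 ≤ s → s < τ → (∫ x in Set.Iic s, f₂ x) = s / a) ∧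
      0 < (∫ s, s * f₂ s) ∧ (∫ s, s * f₂ s) < a / 2 := by
  have ha : 0 < a := hτ.trans hτa
  have hmean := integral_mul_plateauRampDensity hτ.le hτa
  have hmean_pos : 0 < (2 * a ^ 2 + 2 * a * τ - τ ^ 2) / (6 * a) := by
    apply div_pos <;> nlinarith
  have hmean_lt : (2 * a ^ 2 + 2 * a * τ - τ ^ 2) / (6 * a) < a / 2 := by
    rw [div_lt_div_iff₀ (by positivity) two_pos]
    nlinarith [mul_pos (sub_pos.2 hτa) (sub_pos.2 hτa)]
  exact ⟨fun _ ↦ plateauRampDensity_nonneg hτa ha.le, integral_plateauRampDensity hτ.le hτa,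
    fun s hs₀ hsτ ↦ setIntegral_Iic_plateauRampDensity hs₀ hsτ.le, hmean ▸ hmean_pos,
    hmean ▸ hmean_lt⟩

/-- for `0 < τ < a < 2τ`, the function `f₂` given by `f₂(s) = 1/a` on
`[0,τ]`, `f₂(s) = (2/a)(1 − (s−τ)/(a−τ))` on `(τ,a]` and `0` elsewhere is a probability
density on `[0,∞)`, its CDF agrees with the uniform CDF `s ↦ s/a` on `[0,τ)`, and its
mean satisfies `0 < ∫ s f₂(s) ds < a/2`. -/
theorem density_f2_properties (τ a : ℝ) (hτ : 0 < τ) (hτa : τ < a) (ha : a < 2 * τ) :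
    let f₂ : ℝ → ℝ := fun s =>
      if s < 0 then 0
      else if s ≤ τ then 1 / a
      else if s ≤ a then (2 / a) * (1 - (s - τ) / (a - τ))
      else 0
    (∀ s, 0 ≤ f₂ s) ∧ (∫ s, f₂ s) = 1 ∧
      (∀ s, 0 ≤ s → s < τ → (∫ x in Set.Iic s, f₂ x) = s / a) ∧
      0 < (∫ s, s * f₂ s) ∧ (∫ s, s * f₂ s) < a / 2 :=
  density_f2_properties_general τ a hτ hτa
end

section
/- Let w(s) = 1{0 ≤ s ≤ τ} and v(x) = min(x,τ). Then for any probability distribution F on [0,∞) and any t ≥ 0, the threshold-weighted CRPS satisfies ∫_0^τ (1{s ≥ t} − F(s))² ds = E_F |min(X,τ) − min(t,τ)| − (1/2) E_F |min(X,τ) − min(X',τ)|, where X and X' are independent with distribution F. -/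
/-!
Write `H_a(s) = 1{a ≤ s}`. The integrand is
`(E[H_t(s) - H_X(s)])² = E[(H_t(s) - H_X(s))(H_t(s) - H_X'(s))]`, so by Fubini the left side
is the expectation of `∫_0^τ (H_t - H_X)(H_t - H_X')`. Polarization splits this into three
integrals `∫_0^τ (H_a - H_b)²`, each of which is the length `|min(a,τ) - min(b,τ)|` of the
part of `(0, τ]` lying between `a` and `b`.
-/

open MeasureTheory Set

lemma sq_indicator_one_sub_indicator_one {α : Type*} (s t : Set α) (x : α) :
    (s.indicator (1 : α → ℝ) x - t.indicator 1 x) ^ 2 = (symmDiff s t).indicator 1 x := by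
  rw [← apply_indicator_symmDiff (g := fun y : ℝ => y ^ 2) neg_sq]
  by_cases h : x ∈ symmDiff s t <;> simp [h]

lemma integral_sq_integral_eq_integral_prod {α β : Type*} [MeasurableSpace α]
    [MeasurableSpace β] {ν : Measure α} [IsFiniteMeasure ν] {μ : Measure β} [IsFiniteMeasure μ]
    {g : β → α → ℝ} (hg : Measurable (Function.uncurry g)) {C : ℝ} (hC : ∀ x s, ‖g x s‖ ≤ C) :
    ∫ s, (∫ x, g x s ∂μ) ^ 2 ∂ν = ∫ p, ∫ s, g p.1 s * g p.2 s ∂ν ∂μ.prod μ := by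
  have hint : Integrable (Function.uncurry fun s (p : β × β) => g p.1 s * g p.2 s)
      (ν.prod (μ.prod μ)) := by
    refine .of_bound ?_ (C * C) (.of_forall fun z => ?_)
    · have h1 : Measurable fun z : α × β × β => g z.2.1 z.1 :=
        hg.comp (measurable_snd.fst.prodMk measurable_fst)
      have h2 : Measurable fun z : α × β × β => g z.2.2 z.1 :=
        hg.comp (measurable_snd.snd.prodMk measurable_fst)
      exact (h1.mul h2).aestronglyMeasurable
    · change ‖g z.2.1 z.1 * g z.2.2 z.1‖ ≤ C * C
      rw [norm_mul]
      exact mul_le_mul (hC _ _) (hC _ _) (norm_nonneg _) ((norm_nonneg _).trans (hC z.2.1 z.1))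
  calc ∫ s, (∫ x, g x s ∂μ) ^ 2 ∂ν = ∫ s, ∫ p, g p.1 s * g p.2 s ∂μ.prod μ ∂ν := by
        simp_rw [sq, ← integral_prod_mul]
    _ = _ := integral_integral_swap hint

lemma integral_prod_half_sum_sub {β : Type*} [MeasurableSpace β] {μ : Measure β}
    [IsProbabilityMeasure μ] {f : β → ℝ} {k : β × β → ℝ} (hf : Integrable f μ)
    (hk : Integrable k (μ.prod μ)) :
    ∫ p, (f p.1 + f p.2 - k p) / 2 ∂μ.prod μ = ∫ x, f x ∂μ - 1 / 2 * ∫ p, k p ∂μ.prod μ := by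
  have hsum : Integrable (fun p : β × β => f p.1 + f p.2) (μ.prod μ) :=
    (hf.comp_fst μ).add (hf.comp_snd μ)
  rw [integral_div, integral_sub hsum hk,
    integral_add (hf.comp_fst μ) (hf.comp_snd μ), integral_fun_fst, integral_fun_snd,
    probReal_univ, one_smul]
  ring

lemma volume_real_Ico_inter_Ioc {a b c τ : ℝ} (hca : c ≤ a) (hab : a ≤ b) :
    volume.real (Ico a b ∩ Ioc c τ) = min b τ - min a τ := by
  have hae : (Ico a b ∩ Ioc c τ : Set ℝ) =ᵐ[volume] (Ioc a b ∩ Ioc c τ : Set ℝ) :=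
    Ico_ae_eq_Ioc.inter (ae_eq_refl _)
  rw [measureReal_congr hae, Ioc_inter_Ioc, Real.volume_real_Ioc, max_eq_left hca]
  rcases le_total a τ with h | h
  · rw [min_eq_left h, max_eq_left (sub_nonneg.2 (le_min hab h))]
  · rw [min_eq_right h, min_eq_right (h.trans hab), sub_self, max_eq_right (sub_nonpos.2 h)]

lemma integral_Ioc_sq_indicator_Ici_sub (τ : ℝ) {a b : ℝ} (ha : 0 ≤ a) (hb : 0 ≤ b) :
    ∫ s in Ioc 0 τ, ((Ici a).indicator (1 : ℝ → ℝ) s - (Ici b).indicator 1 s) ^ 2 =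
      |min a τ - min b τ| := by
  simp_rw [sq_indicator_one_sub_indicator_one]
  rw [integral_indicator_one (measurableSet_Ici.symmDiff measurableSet_Ici),
    measureReal_restrict_apply (measurableSet_Ici.symmDiff measurableSet_Ici)]
  wlog hab : a ≤ b generalizing a b
  · rw [symmDiff_comm, abs_sub_comm]
    exact this hb ha (le_of_not_ge hab)
  rw [symmDiff_of_ge (Ici_subset_Ici.2 hab), Ici_sdiff_Ici, volume_real_Ico_inter_Ioc ha hab,
    abs_sub_comm, abs_of_nonneg (sub_nonneg.2 (min_le_min_right τ hab))]

lemma integrable_sq_indicator_Ici_sub (ν : Measure ℝ) [IsFiniteMeasure ν] (a b : ℝ) :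
    Integrable (fun s => ((Ici a).indicator (1 : ℝ → ℝ) s - (Ici b).indicator 1 s) ^ 2) ν := by
  simp_rw [sq_indicator_one_sub_indicator_one]
  exact (integrable_const 1).indicator (measurableSet_Ici.symmDiff measurableSet_Ici)

lemma integral_Ioc_indicator_Ici_sub_mul (τ : ℝ) {t a b : ℝ} (ht : 0 ≤ t) (ha : 0 ≤ a)
    (hb : 0 ≤ b) :
    ∫ s in Ioc 0 τ, ((Ici t).indicator (1 : ℝ → ℝ) s - (Ici a).indicator 1 s) *
        ((Ici t).indicator 1 s - (Ici b).indicator 1 s) =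
      (|min a τ - min t τ| + |min b τ - min t τ| - |min a τ - min b τ|) / 2 := by
  have polarize : ∀ x y z : ℝ, (x - y) * (x - z) = ((x - y) ^ 2 + (x - z) ^ 2 - (y - z) ^ 2) / 2 :=
    fun x y z => by ring
  have hint := integrable_sq_indicator_Ici_sub (volume.restrict (Ioc (0 : ℝ) τ))
  simp_rw [polarize]
  rw [integral_div, integral_sub ?_ (hint a b),
    integral_add (hint t a) (hint t b), integral_Ioc_sq_indicator_Ici_sub τ ht ha,
    integral_Ioc_sq_indicator_Ici_sub τ ht hb, integral_Ioc_sq_indicator_Ici_sub τ ha hb,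
    abs_sub_comm (min t τ), abs_sub_comm (min t τ)]
  exact (hint t a).add (hint t b)

lemma measurable_indicator_Ici :
    Measurable (fun p : ℝ × ℝ => (Ici p.1).indicator (1 : ℝ → ℝ) p.2) :=
  measurable_const.indicator (measurableSet_le measurable_fst measurable_snd)

lemma integral_sub_indicator_Ici (μ : Measure ℝ) [IsProbabilityMeasure μ] (c s : ℝ) :
    ∫ x, (c - (Ici x).indicator (1 : ℝ → ℝ) s) ∂μ = c - μ.real (Iic s) := by
  change ∫ x, (c - (Iic s).indicator 1 x) ∂μ = _
  have hind : Integrable ((Iic s).indicator 1) μ :=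
    (integrable_const (1 : ℝ)).indicator measurableSet_Iic
  rw [integral_sub (integrable_const c) hind,
    integral_const, integral_indicator_one measurableSet_Iic, probReal_univ, one_smul]

lemma abs_min_sub_min_le_abs {x y : ℝ} (τ : ℝ) (hx : 0 ≤ x) (hy : 0 ≤ y) :
    |min x τ - min y τ| ≤ |τ| := by
  rcases le_total 0 τ with hτ | hτ
  · rw [abs_of_nonneg hτ, abs_sub_le_iff]
    constructor <;> linarith [min_le_right x τ, min_le_right y τ, le_min hx hτ, le_min hy hτ]
  · rw [min_eq_right (hτ.trans hx), min_eq_right (hτ.trans hy), sub_self, abs_zero]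
    exact abs_nonneg τ

theorem twcrps_kernel_representation_general (μ : Measure ℝ) [IsProbabilityMeasure μ]
    (hsupp : μ (Set.Iio 0) = 0) (τ : ℝ) (t : ℝ) (ht : 0 ≤ t) :
    (∫ s in Set.Ioc 0 τ, ((if s ≥ t then (1 : ℝ) else 0) - (μ (Set.Iic s)).toReal) ^ 2) =
      (∫ x, |min x τ - min t τ| ∂μ) -
        (1 / 2) * ∫ p, |min p.1 τ - min p.2 τ| ∂(μ.prod μ) := by
  have hμ : ∀ᵐ x ∂μ, 0 ≤ x := ae_iff.2 (by simp only [not_le]; exact hsupp)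
  have hμμ : ∀ᵐ p ∂μ.prod μ, 0 ≤ p.1 ∧ 0 ≤ p.2 :=
    (Measure.quasiMeasurePreserving_fst.ae hμ).and (Measure.quasiMeasurePreserving_snd.ae hμ)
  have hf : Integrable (fun x => |min x τ - min t τ|) μ :=
    .of_bound (by fun_prop) |τ| (hμ.mono fun x hx => by simpa using abs_min_sub_min_le_abs τ hx ht)
  have hk : Integrable (fun p : ℝ × ℝ => |min p.1 τ - min p.2 τ|) (μ.prod μ) :=
    .of_bound (by fun_prop) |τ|
      (hμμ.mono fun p hp => by simpa using abs_min_sub_min_le_abs τ hp.1 hp.2)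
  calc _ = ∫ s in Ioc 0 τ, (∫ x, ((Ici t).indicator 1 s - (Ici x).indicator 1 s) ∂μ) ^ 2 := by
        simp_rw [integral_sub_indicator_Ici, indicator_apply, mem_Ici, Pi.one_apply, ge_iff_le,
          measureReal_def]
    _ = ∫ p, (∫ s in Ioc 0 τ, ((Ici t).indicator 1 s - (Ici p.1).indicator 1 s) *
          ((Ici t).indicator 1 s - (Ici p.2).indicator 1 s)) ∂μ.prod μ := by
        refine integral_sq_integral_eq_integral_prod ?_ (C := 1) fun x s => ?_
        · exact ((measurable_const.indicator measurableSet_Ici).comp measurable_snd).sub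
            measurable_indicator_Ici
        · rw [Real.norm_eq_abs, ← sq_le_one_iff_abs_le_one, sq_indicator_one_sub_indicator_one]
          exact indicator_le_self' (fun _ _ => zero_le_one) s
    _ = ∫ p, (|min p.1 τ - min t τ| + |min p.2 τ - min t τ| - |min p.1 τ - min p.2 τ|) / 2
          ∂μ.prod μ :=
        integral_congr_ae (hμμ.mono fun p hp => integral_Ioc_indicator_Ici_sub_mul τ ht hp.1 hp.2)
    _ = _ := integral_prod_half_sum_sub hf hk

/-- kernel representation of the threshold-weighted CRPS with weight
`w = 1{0 ≤ s ≤ τ}` and chaining function `v(x) = min x τ`: for a probability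
distribution `μ` on `[0,∞)` and `t ≥ 0`,
`∫_0^τ (1{s ≥ t} − F(s))² ds = E|min(X,τ) − min(t,τ)| − (1/2) E|min(X,τ) − min(X',τ)|`
with `X, X'` i.i.d. `~ μ`. -/
theorem twcrps_kernel_representation (μ : Measure ℝ) [IsProbabilityMeasure μ]
    (hsupp : μ (Set.Iio 0) = 0) (τ : ℝ) (hτ : 0 < τ) (t : ℝ) (ht : 0 ≤ t) :
    (∫ s in Set.Ioc 0 τ, ((if s ≥ t then (1 : ℝ) else 0) - (μ (Set.Iic s)).toReal) ^ 2) =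
      (∫ x, |min x τ - min t τ| ∂μ) -
        (1 / 2) * ∫ p, |min p.1 τ - min p.2 τ| ∂(μ.prod μ) :=
  twcrps_kernel_representation_general μ hsupp τ t ht
end
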